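/- arXiv:1111.6337 — 4 statements merged into one kernel-verified Lean document; each statement's English description precedes it below -/
import Mathlib

section
/- (Theorem 1) Suppose EVAR > 0 and the step size is η = min{1, L/√EVAR}, where EVAR = ∑_{t=0}^{T−1} ‖∇c_{t+1}(z_t) − ∇c_t(z_t)‖₂² is the extended sequential variation of the run. Then the improved-FTRL algorithm satisfies ∑_{t=1}^T c_t(x_t) − min_{x∈𝒫} ∑_{t=1}^T c_t(x) ≤ max(L, √EVAR). -/
open Finset
open scoped RealInnerProductSpace

abbrev Euc (d : ℕ) := EuclideanSpace ℝ (Fin d)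

/-!
Write `ρ = L / (2η)` and `g_t = ∇c_t(z_{t-1})`. Convexity and `L`-smoothness of `c_t` around
`z_{t-1}` bound `c_t(x_t) - c_t(x⋆)` by `⟪g_t, x_t - x⋆⟫ + (L/2)‖x_t - z_{t-1}‖²`. Minimisers of
a linear function plus `ρ‖· - b‖²` over a convex set satisfy the three-point inequality
`φ(u) ≥ φ(min) + ρ‖u - min‖²`. For `x_t`, tested at `z_t` and combined with Cauchy–Schwarz and
AM–GM on `⟪g_t - ∇c_{t-1}(z_{t-1}), x_t - z_t⟫`, it trades `x_t` for `z_t` at the price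
`‖g_t - ∇c_{t-1}(z_{t-1})‖²/(4ρ) + ρ‖z_t - z_{t-1}‖²`, the `L/2`-term being absorbed as `ρ ≥ L/2`.
For the `z_t` it gives the be-the-leader bound
`∑ ⟪g_t, z_t⟫ + ρ ∑ ‖z_t - z_{t-1}‖² ≤ ⟪∑ g_t, x⋆⟫ + ρ‖x⋆‖²`.
So the regret is at most `EVAR/(4ρ) + ρ`, and the tuned step size makes `ρ = max(L, √EVAR)/2`.
-/

section Gradient

variable {E : Type*} [NormedAddCommGroup E] [InnerProductSpace ℝ E] [CompleteSpace E] {f : E → ℝ}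

theorem hasDerivAt_comp_add_smul (hf : Differentiable ℝ f) (v w : E) (θ : ℝ) :
    HasDerivAt (fun s : ℝ => f (v + s • w)) ⟪gradient f (v + θ • w), w⟫ θ := by
  have hline : HasDerivAt (fun s : ℝ => v + s • w) w θ := by
    simpa using ((hasDerivAt_id θ).smul_const w).const_add v
  rw [inner_gradient_left]
  exact (hf (v + θ • w)).hasFDerivAt.comp_hasDerivAt θ hline

theorem ConvexOn.add_inner_gradient_le (hconv : ConvexOn ℝ Set.univ f) (hf : Differentiable ℝ f)
    (u v : E) : f v + ⟪gradient f v, u - v⟫ ≤ f u := by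
  have hline : ConvexOn ℝ Set.univ (fun s : ℝ => f (v + s • (u - v))) := by
    simpa [Function.comp_def, AffineMap.lineMap_apply, add_comm] using
      hconv.comp_affineMap (AffineMap.lineMap v u)
  have := hline.le_slope_of_hasDerivAt (Set.mem_univ 0) (Set.mem_univ 1) zero_lt_one
    (by simpa using hasDerivAt_comp_add_smul hf v (u - v) 0)
  simp only [slope_def_field, one_smul, add_sub_cancel, zero_smul, add_zero, sub_zero, div_one]
    at this
  rw [inner_gradient_left, map_sub]
  linarith

theorem le_add_inner_gradient_add_of_lipschitz (hf : Differentiable ℝ f) {P : Set E}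
    (hP : Convex ℝ P) {L : ℝ}
    (hlip : ∀ a ∈ P, ∀ b ∈ P, ‖gradient f a - gradient f b‖ ≤ L * ‖a - b‖)
    {u v : E} (hu : u ∈ P) (hv : v ∈ P) :
    f u ≤ f v + ⟪gradient f v, u - v⟫ + L / 2 * ‖u - v‖ ^ 2 := by
  set w := u - v
  let gap : ℝ → ℝ := fun θ => f (v + θ • w) - θ * ⟪gradient f v, w⟫ - L / 2 * θ ^ 2 * ‖w‖ ^ 2
  let gap' : ℝ → ℝ := fun θ => ⟪gradient f (v + θ • w) - gradient f v, w⟫ - L * θ * ‖w‖ ^ 2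
  have hgap : ∀ θ, HasDerivAt gap (gap' θ) θ := fun θ => by
    refine (((hasDerivAt_comp_add_smul hf v w θ).sub ((hasDerivAt_id θ).mul_const _)).sub
      (((hasDerivAt_pow 2 θ).const_mul (L / 2)).mul_const (‖w‖ ^ 2))).congr_deriv ?_
    simp only [gap', inner_sub_left]
    ring
  have hgap'_nonpos : ∀ θ ∈ interior (Set.Icc (0 : ℝ) 1), gap' θ ≤ 0 := by
    intro θ hθ
    rw [interior_Icc] at hθ
    have hmem : v + θ • w ∈ P := hP.add_smul_sub_mem hv hu ⟨hθ.1.le, hθ.2.le⟩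
    have : ⟪gradient f (v + θ • w) - gradient f v, w⟫ ≤ L * θ * ‖w‖ ^ 2 :=
      calc _ ≤ ‖gradient f (v + θ • w) - gradient f v‖ * ‖w‖ := real_inner_le_norm _ _
        _ ≤ L * ‖θ • w‖ * ‖w‖ :=
          mul_le_mul_of_nonneg_right (by simpa using hlip _ hmem _ hv) (norm_nonneg w)
        _ = L * θ * ‖w‖ ^ 2 := by rw [norm_smul, Real.norm_of_nonneg hθ.1.le]; ring
    simp only [gap']
    linarith
  have hanti : AntitoneOn gap (Set.Icc 0 1) :=
    antitoneOn_of_hasDerivWithinAt_nonpos (convex_Icc 0 1)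
      (fun θ _ => (hgap θ).continuousAt.continuousWithinAt)
      (fun θ _ => (hgap θ).hasDerivWithinAt) hgap'_nonpos
  have := hanti (Set.left_mem_Icc.2 zero_le_one) (Set.right_mem_Icc.2 zero_le_one) zero_le_one
  simp only [gap, w, one_smul, add_sub_cancel, zero_smul, add_zero, one_mul, one_pow, mul_one,
    zero_mul, sub_zero, zero_pow two_ne_zero, mul_zero] at this
  linarith

end Gradient

section ProximalStep

variable {E : Type*} [NormedAddCommGroup E] [InnerProductSpace ℝ E] {P : Set E} {ρ : ℝ}

theorem IsMinOn.inner_add_sq_add_sq_le (hP : Convex ℝ P) {a b x u : E}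
    (hmin : IsMinOn (fun u => ⟪a, u⟫ + ρ * ‖u - b‖ ^ 2) P x) (hx : x ∈ P) (hu : u ∈ P) :
    ⟪a, x⟫ + ρ * ‖x - b‖ ^ 2 + ρ * ‖u - x‖ ^ 2 ≤ ⟪a, u⟫ + ρ * ‖u - b‖ ^ 2 := by
  have hderiv : HasFDerivAt (fun u => ⟪a, u⟫ + ρ * ‖u - b‖ ^ 2)
      (innerSL ℝ a + ρ • (2 • (innerSL ℝ (x - b)).comp (ContinuousLinearMap.id ℝ E))) x :=
    (innerSL ℝ a).hasFDerivAt.add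
      (((hasFDerivAt_id x).sub_const b).norm_sq.const_mul ρ)
  have hfirst := hmin.localize.hasFDerivWithinAt_nonneg hderiv.hasFDerivWithinAt
    (sub_mem_posTangentConeAt_of_segment_subset (hP.segment_subset hx hu))
  have hsplit : u - b = (x - b) + (u - x) := by abel
  simp only [add_apply, coe_innerSL_apply, smul_apply,
    ContinuousLinearMap.comp_id, nsmul_eq_mul, Nat.cast_ofNat, smul_eq_mul] at hfirst
  rw [hsplit, norm_add_sq_real]
  simp only [inner_sub_left, inner_sub_right] at hfirst ⊢
  linarith

theorem sum_inner_add_sq_le_of_isMinOn (hP : Convex ℝ P) (hρ : 0 ≤ ρ) (g z : ℕ → E)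
    {T : ℕ} (hz : ∀ t ≤ T, z t ∈ P ∧
      IsMinOn (fun u => ⟪∑ s ∈ range t, g s, u⟫ + ρ * ‖u‖ ^ 2) P (z t)) {u : E} (hu : u ∈ P) :
    ∑ s ∈ range T, (⟪g s, z (s + 1)⟫ + ρ * ‖z (s + 1) - z s‖ ^ 2)
      ≤ ⟪∑ s ∈ range T, g s, u⟫ + ρ * ‖u‖ ^ 2 := by
  have hprox : ∀ t ≤ T, ∀ v ∈ P, ⟪∑ s ∈ range t, g s, z t⟫ + ρ * ‖z t‖ ^ 2 + ρ * ‖v - z t‖ ^ 2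
      ≤ ⟪∑ s ∈ range t, g s, v⟫ + ρ * ‖v‖ ^ 2 := fun t ht v hv => by
    have hmin : IsMinOn (fun u => ⟪∑ s ∈ range t, g s, u⟫ + ρ * ‖u - 0‖ ^ 2) P (z t) := by
      simpa using (hz t ht).2
    simpa using hmin.inner_add_sq_add_sq_le hP (hz t ht).1 hv
  have hleader : ∀ t ≤ T, ∑ s ∈ range t, (⟪g s, z (s + 1)⟫ + ρ * ‖z (s + 1) - z s‖ ^ 2)
      ≤ ⟪∑ s ∈ range t, g s, z t⟫ + ρ * ‖z t‖ ^ 2 := by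
    intro t ht
    induction t with
    | zero => simp only [range_zero, sum_empty, inner_zero_left]; positivity
    | succ t ih =>
      have := hprox t (by omega) (z (t + 1)) (hz (t + 1) ht).1
      rw [sum_range_succ, sum_range_succ, inner_add_left]
      linarith [ih (by omega)]
  have hdist : 0 ≤ ρ * ‖u - z T‖ ^ 2 := by positivity
  linarith [hleader T le_rfl, hprox T le_rfl u hu]

end ProximalStep

theorem mul_le_sq_div_add_mul_sq {ρ : ℝ} (hρ : 0 < ρ) (a b : ℝ) :
    a * b ≤ a ^ 2 / (4 * ρ) + ρ * b ^ 2 := by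
  have : a * b - ρ * b ^ 2 ≤ a ^ 2 / (4 * ρ) := by
    rw [le_div_iff₀ (by positivity)]
    nlinarith [sq_nonneg (a - 2 * ρ * b)]
  linarith

section OptimisticFTRL

variable {E : Type*} [NormedAddCommGroup E] [InnerProductSpace ℝ E] [CompleteSpace E]
  {P : Set E} {L ρ : ℝ}

theorem optimistic_step_sub_le (hP : Convex ℝ P) {f : E → ℝ} (hconv : ConvexOn ℝ Set.univ f)
    (hf : Differentiable ℝ f)
    (hlip : ∀ a ∈ P, ∀ b ∈ P, ‖gradient f a - gradient f b‖ ≤ L * ‖a - b‖)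
    (hρ : 0 < ρ) (hLρ : L / 2 ≤ ρ) {m z x z' : E} (hz : z ∈ P) (hx : x ∈ P) (hz' : z' ∈ P)
    (hmin : IsMinOn (fun u => ⟪m, u⟫ + ρ * ‖u - z‖ ^ 2) P x) (u : E) :
    f x - f u ≤ ‖gradient f z - m‖ ^ 2 / (4 * ρ) + ρ * ‖z' - z‖ ^ 2 + ⟪gradient f z, z' - u⟫ := by
  set g := gradient f z
  have hlower := hconv.add_inner_gradient_le hf u z
  have hupper := le_add_inner_gradient_add_of_lipschitz hf hP hlip hx hz
  have hprox := hmin.inner_add_sq_add_sq_le hP hx hz'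
  have hsmooth : L / 2 * ‖x - z‖ ^ 2 ≤ ρ * ‖x - z‖ ^ 2 := by gcongr
  have hcross : ⟪g - m, x - z'⟫ ≤ ‖g - m‖ ^ 2 / (4 * ρ) + ρ * ‖z' - x‖ ^ 2 := by
    rw [norm_sub_rev z']
    exact (real_inner_le_norm _ _).trans (mul_le_sq_div_add_mul_sq hρ _ _)
  simp only [inner_sub_left, inner_sub_right] at hlower hupper hcross ⊢
  linarith

theorem optimistic_ftrl_regret_le (hP : Convex ℝ P) (f : ℕ → E → ℝ) {T : ℕ}
    (hconv : ∀ s < T, ConvexOn ℝ Set.univ (f (s + 1)))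
    (hdiff : ∀ s < T, Differentiable ℝ (f (s + 1)))
    (hlip : ∀ s < T, ∀ a ∈ P, ∀ b ∈ P,
      ‖gradient (f (s + 1)) a - gradient (f (s + 1)) b‖ ≤ L * ‖a - b‖)
    (hρ : 0 < ρ) (hLρ : L / 2 ≤ ρ) (x z : ℕ → E)
    (hx : ∀ s < T, x (s + 1) ∈ P ∧
      IsMinOn (fun u => ⟪gradient (f s) (z s), u⟫ + ρ * ‖u - z s‖ ^ 2) P (x (s + 1)))
    (hz : ∀ t ≤ T, z t ∈ P ∧
      IsMinOn (fun u => ⟪∑ s ∈ range t, gradient (f (s + 1)) (z s), u⟫ + ρ * ‖u‖ ^ 2) P (z t))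
    {u : E} (hu : u ∈ P) :
    ∑ s ∈ range T, (f (s + 1) (x (s + 1)) - f (s + 1) u)
      ≤ (∑ s ∈ range T, ‖gradient (f (s + 1)) (z s) - gradient (f s) (z s)‖ ^ 2) / (4 * ρ)
        + ρ * ‖u‖ ^ 2 := by
  have hleader := sum_inner_add_sq_le_of_isMinOn hP hρ.le _ z hz hu
  calc ∑ s ∈ range T, (f (s + 1) (x (s + 1)) - f (s + 1) u)
      ≤ ∑ s ∈ range T, (‖gradient (f (s + 1)) (z s) - gradient (f s) (z s)‖ ^ 2 / (4 * ρ)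
          + (⟪gradient (f (s + 1)) (z s), z (s + 1)⟫ + ρ * ‖z (s + 1) - z s‖ ^ 2)
          - ⟪gradient (f (s + 1)) (z s), u⟫) := by
        refine sum_le_sum fun s hs => ?_
        have hs : s < T := mem_range.1 hs
        have := optimistic_step_sub_le hP (hconv s hs) (hdiff s hs) (hlip s hs) hρ hLρ
          (hz s hs.le).1 (hx s hs).1 (hz (s + 1) hs).1 (hx s hs).2 u
        rw [inner_sub_right] at this
        linarith
    _ ≤ _ := by
        rw [sum_sub_distrib, sum_add_distrib, ← sum_div, ← sum_inner]
        linarith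

end OptimisticFTRL

theorem div_two_mul_min_one_div {L s : ℝ} (hL : 0 < L) (hs : 0 < s) :
    L / (2 * min 1 (L / s)) = max L s / 2 := by
  rcases le_total L s with h | h
  · rw [min_eq_right ((div_le_one hs).2 h), max_eq_right h]
    field_simp
  · rw [min_eq_left ((one_le_div hs).2 h), max_eq_left h]
    ring

theorem sq_div_add_le_of_sqrt_le {V M : ℝ} (hM : 0 < M) (hVM : √V ≤ M) :
    V / (4 * (M / 2)) + M / 2 ≤ M := by
  have hV : V ≤ M ^ 2 := (Real.sqrt_le_left hM.le).1 hVM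
  have : V / (4 * (M / 2)) ≤ M / 2 := by
    rw [div_le_iff₀ (by positivity)]
    nlinarith
  linarith

theorem sum_Icc_one_eq_sum_range {M : Type*} [AddCommMonoid M] (f : ℕ → M) (t : ℕ) :
    ∑ τ ∈ Icc 1 t, f τ = ∑ s ∈ range t, f (s + 1) := by
  rw [← Ico_add_one_right_eq_Icc, sum_Ico_eq_sum_range]
  simp [add_comm]

theorem improved_ftrl_theorem_one_general {d T : ℕ}
    (P : Set (Euc d)) (hPconv : Convex ℝ P)
    (hPball : P ⊆ Metric.closedBall 0 1) (h0P : (0 : Euc d) ∈ P)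
    (c : ℕ → Euc d → ℝ)
    (L : ℝ) (hL : 0 < L)
    (hconv : ∀ t, 1 ≤ t → t ≤ T → ConvexOn ℝ Set.univ (c t))
    (hdiff : ∀ t, 1 ≤ t → t ≤ T → Differentiable ℝ (c t))
    (hlip : ∀ t, 1 ≤ t → t ≤ T → ∀ u ∈ P, ∀ v ∈ P,
      ‖gradient (c t) u - gradient (c t) v‖ ≤ L * ‖u - v‖)
    (x z : ℕ → Euc d) (hz0 : z 0 = 0)
    (V : ℝ)
    (hV : V = ∑ t ∈ Finset.range T, ‖gradient (c (t + 1)) (z t) - gradient (c t) (z t)‖ ^ 2)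
    (hVpos : 0 < V)
    (η : ℝ) (hηdef : η = min 1 (L / Real.sqrt V))
    (hx : ∀ t, 1 ≤ t → t ≤ T → x t ∈ P ∧
      IsMinOn (fun u => ⟪gradient (c (t - 1)) (z (t - 1)), u⟫
        + L / (2 * η) * ‖u - z (t - 1)‖ ^ 2) P (x t))
    (hz : ∀ t, 1 ≤ t → t ≤ T → z t ∈ P ∧
      IsMinOn (fun u => (∑ τ ∈ Finset.Icc 1 t, ⟪gradient (c τ) (z (τ - 1)), u⟫)
        + L / (2 * η) * ‖u‖ ^ 2) P (z t))
    (xstar : Euc d) (hxstar : xstar ∈ P) :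
    (∑ t ∈ Finset.Icc 1 T, c t (x t)) - (∑ t ∈ Finset.Icc 1 T, c t xstar)
      ≤ max L (Real.sqrt V) := by
  set M := max L √V
  have hM : 0 < M := lt_max_of_lt_left hL
  have hρ : L / (2 * η) = M / 2 := hηdef ▸ div_two_mul_min_one_div hL (Real.sqrt_pos.2 hVpos)
  simp only [hρ] at hx hz
  have hz' : ∀ t ≤ T, z t ∈ P ∧ IsMinOn (fun u =>
      ⟪∑ s ∈ range t, gradient (c (s + 1)) (z s), u⟫ + M / 2 * ‖u‖ ^ 2) P (z t) := by
    intro t ht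
    rcases Nat.eq_zero_or_pos t with rfl | ht0
    · exact ⟨hz0 ▸ h0P, fun u _ => by simpa [hz0] using by positivity⟩
    · simpa [sum_inner, sum_Icc_one_eq_sum_range] using hz t ht0 ht
  have hregret := optimistic_ftrl_regret_le hPconv c (T := T)
    (fun s hs => hconv (s + 1) (by omega) hs) (fun s hs => hdiff (s + 1) (by omega) hs)
    (fun s hs => hlip (s + 1) (by omega) hs) (by positivity) (by gcongr; exact le_max_left _ _)
    x z (fun s hs => by simpa using hx (s + 1) (by omega) hs) hz' hxstar
  have hxstar_norm : ‖xstar‖ ^ 2 ≤ 1 := pow_le_one₀ (norm_nonneg _) (by simpa using hPball hxstar)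
  rw [sum_Icc_one_eq_sum_range, sum_Icc_one_eq_sum_range, ← sum_sub_distrib]
  calc _ ≤ V / (4 * (M / 2)) + M / 2 * ‖xstar‖ ^ 2 := hV ▸ hregret
    _ ≤ V / (4 * (M / 2)) + M / 2 := by
      gcongr
      exact mul_le_of_le_one_right (by positivity) hxstar_norm
    _ ≤ M := sq_div_add_le_of_sqrt_le hM (le_max_right _ _)

/-- Theorem 1: regret bound of the improved FTRL algorithm with the tuned step size
`η = min{1, L/√EVAR}`, where `EVAR` is the extended sequential variation of the run. -/
theorem improved_ftrl_theorem_one {d T : ℕ} (hT : 1 ≤ T)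
    (P : Set (Euc d)) (hPconv : Convex ℝ P) (hPcl : IsClosed P)
    (hPball : P ⊆ Metric.closedBall 0 1) (h0P : (0 : Euc d) ∈ P)
    (c : ℕ → Euc d → ℝ) (hc0 : c 0 = fun _ => (0 : ℝ))
    (L : ℝ) (hL : 0 < L)
    (hconv : ∀ t, 1 ≤ t → t ≤ T → ConvexOn ℝ Set.univ (c t))
    (hdiff : ∀ t, 1 ≤ t → t ≤ T → Differentiable ℝ (c t))
    (hlip : ∀ t, 1 ≤ t → t ≤ T → ∀ u ∈ P, ∀ v ∈ P,
      ‖gradient (c t) u - gradient (c t) v‖ ≤ L * ‖u - v‖)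
    (x z : ℕ → Euc d) (hz0 : z 0 = 0)
    (V : ℝ)
    (hV : V = ∑ t ∈ Finset.range T, ‖gradient (c (t + 1)) (z t) - gradient (c t) (z t)‖ ^ 2)
    (hVpos : 0 < V)
    (η : ℝ) (hηdef : η = min 1 (L / Real.sqrt V))
    (hx : ∀ t, 1 ≤ t → t ≤ T → x t ∈ P ∧
      IsMinOn (fun u => ⟪gradient (c (t - 1)) (z (t - 1)), u⟫
        + L / (2 * η) * ‖u - z (t - 1)‖ ^ 2) P (x t))
    (hz : ∀ t, 1 ≤ t → t ≤ T → z t ∈ P ∧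
      IsMinOn (fun u => (∑ τ ∈ Finset.Icc 1 t, ⟪gradient (c τ) (z (τ - 1)), u⟫)
        + L / (2 * η) * ‖u‖ ^ 2) P (z t))
    (xstar : Euc d) (hxstar : xstar ∈ P)
    (hmin : IsMinOn (fun u => ∑ t ∈ Finset.Icc 1 T, c t u) P xstar) :
    (∑ t ∈ Finset.Icc 1 T, c t (x t)) - (∑ t ∈ Finset.Icc 1 T, c t xstar)
      ≤ max L (Real.sqrt V) :=
  improved_ftrl_theorem_one_general P hPconv hPball h0P c L hL hconv hdiff hlip x z hz0 V hV hVpos η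
    hηdef hx hz xstar hxstar
end

section
/- (Per-step inequality in the proof of Theorem 2) Under the prox-method updates with step size η ∈ (0, 1/2], for every t = 1,…,T and every z ∈ 𝒫: (η/L)(c_t(x_t) − c_t(z)) ≤ (1/2)(‖z − z_{t−1}‖₂² − ‖z − z_t‖₂²) + (2η²/L²)‖∇c_t(z_{t−1}) − ∇c_{t−1}(z_{t−1})‖₂². -/
open scoped RealInnerProductSpace

/-! Both updates minimise `u ↦ ⟪v, u⟫ + γ‖u - p‖²` over `𝒫` with `γ = L/(2η)`, so first-order
optimality and the law of cosines give the three-point inequality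
`⟪v, m - w⟫ ≤ γ (‖w - p‖² - ‖w - m‖² - ‖m - p‖²)` for each minimiser `m`. Adding it for `z_t`, and
for `x_t` tested at `z_t`, to the gradient inequality `c_t(x_t) - c_t(w) ≤ ⟪∇c_t(x_t), x_t - w⟫`
leaves `⟪∇c_t(x_t) - ∇c_{t-1}(z_{t-1}), x_t - z_t⟫ - γ‖x_t - z_t‖² - γ‖x_t - z_{t-1}‖²`.
Cauchy–Schwarz, the Lipschitz bound at `x_t, z_{t-1}` and Young's inequality bound this by
`‖∇c_t(z_{t-1}) - ∇c_{t-1}(z_{t-1})‖² / (2γ)` as soon as `L² ≤ 2γ²`, i.e. `2η² ≤ 1`. -/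

open Set
open scoped Gradient

theorem ConvexOn.le_sub_of_hasFDerivAt {E : Type*} [NormedAddCommGroup E] [NormedSpace ℝ E]
    {f : E → ℝ} (hf : ConvexOn ℝ univ f) {f' : E →L[ℝ] ℝ}
    {a : E} (hfa : HasFDerivAt f f' a) (w : E) : f' (w - a) ≤ f w - f a := by
  have hline : HasDerivAt (f ∘ AffineMap.lineMap (k := ℝ) a w) (f' (w - a)) 0 :=
    hfa.comp_hasDerivAt_of_eq 0 AffineMap.hasDerivAt_lineMap (by simp)
  simpa [slope_def_field] using (hf.comp_affineMap (AffineMap.lineMap a w)).le_slope_of_hasDerivAt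
    (mem_univ 0) (mem_univ 1) zero_lt_one hline

section

variable {F : Type*} [NormedAddCommGroup F] [InnerProductSpace ℝ F]

theorem IsMinOn.prox_three_point {P : Set F} (hP : Convex ℝ P) {v p m w : F} {γ : ℝ}
    (hmin : IsMinOn (fun u => ⟪v, u⟫ + γ * ‖u - p‖ ^ 2) P m) (hmP : m ∈ P) (hwP : w ∈ P) :
    ⟪v, m - w⟫ ≤ γ * (‖w - p‖ ^ 2 - ‖w - m‖ ^ 2 - ‖m - p‖ ^ 2) := by
  have hderiv : HasFDerivAt (fun u => ⟪v, u⟫ + γ * ‖u - p‖ ^ 2)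
      (innerSL ℝ v + γ • (2 • (innerSL ℝ (m - p)).comp (ContinuousLinearMap.id ℝ F))) m :=
    (innerSL ℝ v).hasFDerivAt.add (((hasFDerivAt_id m).sub_const p).norm_sq.const_mul γ)
  have hfirst := (hmin.localize.hasFDerivWithinAt_nonneg hderiv.hasFDerivWithinAt
    (sub_mem_posTangentConeAt_of_segment_subset (hP.segment_subset hmP hwP)))
  have hsplit : ‖w - p‖ ^ 2 = ‖m - p‖ ^ 2 + 2 * ⟪m - p, w - m⟫ + ‖w - m‖ ^ 2 := by
    rw [← norm_add_sq_real, sub_add_sub_cancel']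
  simp only [add_apply, innerSL_apply_apply, smul_apply,
    ContinuousLinearMap.comp_apply, ContinuousLinearMap.id_apply, smul_eq_mul, two_nsmul] at hfirst
  rw [inner_sub_right, hsplit]
  rw [inner_sub_right] at hfirst
  linear_combination hfirst

theorem optimistic_prox_step_le [CompleteSpace F] {P : Set F} (hP : Convex ℝ P) {f : F → ℝ}
    (hf : ConvexOn ℝ univ f) {g p x z w : F} (hfx : DifferentiableAt ℝ f x) {L γ : ℝ}
    (hγ : 0 < γ) (hLγ : L ^ 2 ≤ 2 * γ ^ 2) (hlip : ‖∇ f x - ∇ f p‖ ≤ L * ‖x - p‖)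
    (hx : IsMinOn (fun u => ⟪g, u⟫ + γ * ‖u - p‖ ^ 2) P x)
    (hz : IsMinOn (fun u => ⟪∇ f x, u⟫ + γ * ‖u - p‖ ^ 2) P z)
    (hxP : x ∈ P) (hzP : z ∈ P) (hwP : w ∈ P) :
    f x - f w ≤ γ * (‖w - p‖ ^ 2 - ‖w - z‖ ^ 2) + ‖∇ f p - g‖ ^ 2 / (2 * γ) := by
  have hzw := hz.prox_three_point hP hzP hwP
  have hxz := hx.prox_three_point hP hxP hzP
  have hconv : f x - f w ≤ ⟪∇ f x, x - w⟫ := by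
    have := hf.le_sub_of_hasFDerivAt (hasGradientAt_iff_hasFDerivAt.mp hfx.hasGradientAt) w
    rw [InnerProductSpace.toDual_apply_apply, ← neg_sub x w, inner_neg_right] at this
    linarith
  have hsplit : ⟪∇ f x, x - w⟫ = ⟪∇ f x, z - w⟫ + ⟪g, x - z⟫ + ⟪∇ f x - g, x - z⟫ := by
    simp only [inner_sub_left, inner_sub_right]
    ring
  have hcs : ⟪∇ f x - g, x - z⟫ ≤ ‖∇ f x - g‖ * ‖x - z‖ := real_inner_le_norm _ _
  have htri : ‖∇ f x - g‖ ≤ L * ‖x - p‖ + ‖∇ f p - g‖ :=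
    (norm_sub_le_norm_sub_add_norm_sub _ _ _).trans (by gcongr)
  have hyoung : ‖∇ f x - g‖ * ‖x - z‖ - γ * ‖x - z‖ ^ 2 - γ * ‖x - p‖ ^ 2
      ≤ ‖∇ f p - g‖ ^ 2 / (2 * γ) := by
    rw [le_div_iff₀ (by positivity)]
    have hgrad := mul_le_mul_of_nonneg_left
      (mul_le_mul_of_nonneg_right htri (norm_nonneg (x - z))) (by positivity : 0 ≤ 2 * γ)
    have hL := mul_le_mul_of_nonneg_right hLγ (sq_nonneg ‖x - p‖)
    linarith [sq_nonneg (γ * ‖x - z‖ - L * ‖x - p‖), sq_nonneg (γ * ‖x - z‖ - ‖∇ f p - g‖)]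
  rw [norm_sub_rev z x] at hxz
  linarith

end

theorem prox_per_step_inequality_general {d T : ℕ}
    (P : Set (Euc d)) (hPconv : Convex ℝ P) (h0P : (0 : Euc d) ∈ P)
    (c : ℕ → Euc d → ℝ)
    (L : ℝ) (hL : 0 < L)
    (hconv : ∀ t, 1 ≤ t → t ≤ T → ConvexOn ℝ Set.univ (c t))
    (hdiff : ∀ t, 1 ≤ t → t ≤ T → Differentiable ℝ (c t))
    (hlip : ∀ t, 1 ≤ t → t ≤ T → ∀ u ∈ P, ∀ v ∈ P,
      ‖gradient (c t) u - gradient (c t) v‖ ≤ L * ‖u - v‖)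
    (η : ℝ) (hη0 : 0 < η) (hη1 : η ≤ 1 / 2)
    (x z : ℕ → Euc d) (hz0 : z 0 = 0)
    (hx : ∀ t, 1 ≤ t → t ≤ T → x t ∈ P ∧
      IsMinOn (fun u => ⟪gradient (c (t - 1)) (z (t - 1)), u⟫
        + L / (2 * η) * ‖u - z (t - 1)‖ ^ 2) P (x t))
    (hz : ∀ t, 1 ≤ t → t ≤ T → z t ∈ P ∧
      IsMinOn (fun u => ⟪gradient (c t) (x t), u⟫
        + L / (2 * η) * ‖u - z (t - 1)‖ ^ 2) P (z t)) :
    ∀ t, 1 ≤ t → t ≤ T → ∀ w ∈ P,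
      η / L * (c t (x t) - c t w)
        ≤ 1 / 2 * (‖w - z (t - 1)‖ ^ 2 - ‖w - z t‖ ^ 2)
          + 2 * η ^ 2 / L ^ 2 *
            ‖gradient (c t) (z (t - 1)) - gradient (c (t - 1)) (z (t - 1))‖ ^ 2 := by
  intro t ht1 htT w hw
  obtain ⟨hxP, hxmin⟩ := hx t ht1 htT
  obtain ⟨hzP, hzmin⟩ := hz t ht1 htT
  have hprev : z (t - 1) ∈ P := by
    rcases ht1.eq_or_lt with rfl | ht
    · simpa [hz0] using h0P
    · exact (hz (t - 1) (by omega) (by omega)).1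
  have hLγ : L ^ 2 ≤ 2 * (L / (2 * η)) ^ 2 := by
    rw [div_pow, mul_pow, mul_div_assoc', le_div_iff₀ (by positivity)]
    have hη2 : η ^ 2 ≤ 1 / 2 := by nlinarith
    nlinarith [mul_le_mul_of_nonneg_left hη2 (sq_nonneg L)]
  have hstep := optimistic_prox_step_le hPconv (hconv t ht1 htT) (hdiff t ht1 htT (x t))
    (by positivity) hLγ (hlip t ht1 htT _ hxP _ hprev) hxmin hzmin hxP hzP hw
  calc η / L * (c t (x t) - c t w)
      ≤ η / L * (L / (2 * η) * (‖w - z (t - 1)‖ ^ 2 - ‖w - z t‖ ^ 2)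
          + ‖∇ (c t) (z (t - 1)) - ∇ (c (t - 1)) (z (t - 1))‖ ^ 2 / (2 * (L / (2 * η)))) := by
        gcongr
    _ = 1 / 2 * (‖w - z (t - 1)‖ ^ 2 - ‖w - z t‖ ^ 2)
          + η ^ 2 / L ^ 2 * ‖∇ (c t) (z (t - 1)) - ∇ (c (t - 1)) (z (t - 1))‖ ^ 2 := by
        field_simp
    _ ≤ _ := by gcongr; linarith [sq_nonneg η]

/-- The per-step inequality in the proof of Theorem 2: under the prox-method updates
with step size `η ∈ (0, 1/2]`, for every `t = 1,…,T` and every `w ∈ P`,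
`(η/L)(c_t(x_t) - c_t(w)) ≤ (1/2)(‖w - z_{t-1}‖² - ‖w - z_t‖²)
  + (2η²/L²)‖∇c_t(z_{t-1}) - ∇c_{t-1}(z_{t-1})‖²`. -/
theorem prox_per_step_inequality {d T : ℕ} (hT : 1 ≤ T)
    (P : Set (Euc d)) (hPconv : Convex ℝ P) (hPcl : IsClosed P)
    (hPball : P ⊆ Metric.closedBall 0 1) (h0P : (0 : Euc d) ∈ P)
    (c : ℕ → Euc d → ℝ) (hc0 : c 0 = fun _ => (0 : ℝ))
    (L : ℝ) (hL : 0 < L)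
    (hconv : ∀ t, 1 ≤ t → t ≤ T → ConvexOn ℝ Set.univ (c t))
    (hdiff : ∀ t, 1 ≤ t → t ≤ T → Differentiable ℝ (c t))
    (hlip : ∀ t, 1 ≤ t → t ≤ T → ∀ u ∈ P, ∀ v ∈ P,
      ‖gradient (c t) u - gradient (c t) v‖ ≤ L * ‖u - v‖)
    (η : ℝ) (hη0 : 0 < η) (hη1 : η ≤ 1 / 2)
    (x z : ℕ → Euc d) (hz0 : z 0 = 0)
    (hx : ∀ t, 1 ≤ t → t ≤ T → x t ∈ P ∧
      IsMinOn (fun u => ⟪gradient (c (t - 1)) (z (t - 1)), u⟫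
        + L / (2 * η) * ‖u - z (t - 1)‖ ^ 2) P (x t))
    (hz : ∀ t, 1 ≤ t → t ≤ T → z t ∈ P ∧
      IsMinOn (fun u => ⟪gradient (c t) (x t), u⟫
        + L / (2 * η) * ‖u - z (t - 1)‖ ^ 2) P (z t)) :
    ∀ t, 1 ≤ t → t ≤ T → ∀ w ∈ P,
      η / L * (c t (x t) - c t w)
        ≤ 1 / 2 * (‖w - z (t - 1)‖ ^ 2 - ‖w - z t‖ ^ 2)
          + 2 * η ^ 2 / L ^ 2 *
            ‖gradient (c t) (z (t - 1)) - gradient (c (t - 1)) (z (t - 1))‖ ^ 2 :=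
  prox_per_step_inequality_general P hPconv h0P c L hL hconv hdiff hlip η hη0 hη1 x z hz0 hx hz
end

section
/- Under the prox-method updates with step size η ∈ (0, 1/2], the regret satisfies ∑_{t=1}^T c_t(x_t) − min_{x∈𝒫} ∑_{t=1}^T c_t(x) ≤ L/(2η) + (2η/L) ∑_{t=0}^{T−1} ‖∇c_{t+1}(z_t) − ∇c_t(z_t)‖₂². -/
/-!
Write `γ = L / (2η)`, so `η ≤ 1/2` means `L ≤ γ`. Round `t` consists of two prox steps from the
same centre `z_{t-1}`, with linear parts `m = ∇c_{t-1}(z_{t-1})` and `g = ∇c_t(x_t)`. The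
three-point inequality of a prox step, applied to `z_t` against the comparator `u` and to `x_t`
against `z_t`, together with convexity `c_t(x_t) - c_t(u) ≤ ⟪g, x_t - u⟫`, bounds the regret of
the round by
`γ (‖u - z_{t-1}‖² - ‖u - z_t‖²) + ⟪g - m, x_t - z_t⟫ - γ (‖x_t - z_{t-1}‖² + ‖x_t - z_t‖²)`.
Since `‖g - m‖ ≤ L ‖x_t - z_{t-1}‖ + ‖∇c_t(z_{t-1}) - m‖`, Young's inequality absorbs the middle
term into the negative squares up to `‖∇c_t(z_{t-1}) - m‖² / (2γ)`, and the distance terms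
telescope to at most `γ ‖u - z_0‖² ≤ γ`.
-/

open Finset
open scoped RealInnerProductSpace

section
variable {E : Type*} [NormedAddCommGroup E] [InnerProductSpace ℝ E]

theorem ConvexOn.add_inner_gradient_le_s6 [CompleteSpace E] {s : Set E} {f : E → ℝ}
    (hf : ConvexOn ℝ s f) {a b : E} (ha : a ∈ s) (hb : b ∈ s) (hfa : DifferentiableAt ℝ f a) :
    f a + ⟪gradient f a, b - a⟫ ≤ f b := by
  set φ : ℝ → ℝ := f ∘ AffineMap.lineMap a b
  have hφ : ConvexOn ℝ (Set.Icc 0 1) φ :=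
    (hf.comp_affineMap _).subset (fun t ht => hf.1.lineMap_mem ha hb ht) (convex_Icc 0 1)
  have hφ' : HasDerivAt φ ⟪gradient f a, b - a⟫ 0 := by
    have := hfa.hasGradientAt.hasFDerivAt.comp_hasDerivAt_of_eq (0 : ℝ)
      (AffineMap.hasDerivAt_lineMap (a := a) (b := b) (x := 0)) (by simp)
    simpa [φ, Function.comp_def] using this
  have := hφ.le_slope_of_hasDerivAt (by simp) (by simp) zero_lt_one hφ'
  simp only [slope_def_field, φ, Function.comp_apply, AffineMap.lineMap_apply_zero,
    AffineMap.lineMap_apply_one, sub_zero, div_one] at this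
  linarith

theorem inner_sub_le_of_isMinOn_prox {P : Set E} (hP : Convex ℝ P) {g z₀ z u : E} {γ : ℝ}
    (hz : z ∈ P) (hmin : IsMinOn (fun v => ⟪g, v⟫ + γ * ‖v - z₀‖ ^ 2) P z) (hu : u ∈ P) :
    ⟪g, z - u⟫ ≤ γ * (‖u - z₀‖ ^ 2 - ‖u - z‖ ^ 2 - ‖z - z₀‖ ^ 2) := by
  have hderiv : HasFDerivAt (fun v => ⟪g, v⟫ + γ * ‖v - z₀‖ ^ 2)
      (innerSL ℝ g + γ • (2 • (innerSL ℝ (z - z₀)).comp (ContinuousLinearMap.id ℝ E))) z :=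
    (innerSL ℝ g).hasFDerivAt.add
      ((((hasFDerivAt_id z).sub_const z₀).norm_sq).const_mul γ)
  have hfirst : 0 ≤ ⟪g, u - z⟫ + γ * (2 * ⟪z - z₀, u - z⟫) := by
    simpa [inner_sub_left] using hmin.localize.hasFDerivWithinAt_nonneg hderiv.hasFDerivWithinAt
      (sub_mem_posTangentConeAt_of_segment_subset (hP.segment_subset hz hu))
  have hthree : ‖u - z₀‖ ^ 2 = ‖z - z₀‖ ^ 2 + 2 * ⟪z - z₀, u - z⟫ + ‖u - z‖ ^ 2 := by
    rw [← norm_add_sq_real, sub_add_sub_cancel']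
  rw [hthree, ← neg_sub u z, inner_neg_right]
  linear_combination hfirst

theorem prox_step_regret_le [CompleteSpace E] {P : Set E} (hP : Convex ℝ P) {f : E → ℝ}
    (hf : ConvexOn ℝ P f) {m z₀ x z u : E} {L γ : ℝ} (hγ : 0 < γ) (hLγ : L ≤ γ)
    (hfx : DifferentiableAt ℝ f x) (hlip : ‖gradient f x - gradient f z₀‖ ≤ L * ‖x - z₀‖)
    (hx : x ∈ P) (hxmin : IsMinOn (fun v => ⟪m, v⟫ + γ * ‖v - z₀‖ ^ 2) P x)
    (hz : z ∈ P) (hzmin : IsMinOn (fun v => ⟪gradient f x, v⟫ + γ * ‖v - z₀‖ ^ 2) P z)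
    (hu : u ∈ P) :
    f x - f u ≤ γ * (‖u - z₀‖ ^ 2 - ‖u - z‖ ^ 2) + ‖gradient f z₀ - m‖ ^ 2 / (2 * γ) := by
  set g := gradient f x
  set δ := ‖gradient f z₀ - m‖
  have hconvex : f x - f u ≤ ⟪g, x - u⟫ := by
    have := hf.add_inner_gradient_le_s6 hx hu hfx
    rw [← neg_sub x u, inner_neg_right] at this
    linarith
  have hz_step := inner_sub_le_of_isMinOn_prox hP hz hzmin hu
  have hx_step : ⟪m, x - z⟫ ≤ γ * (‖z - z₀‖ ^ 2 - ‖x - z‖ ^ 2 - ‖x - z₀‖ ^ 2) := by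
    simpa only [norm_sub_rev z x] using inner_sub_le_of_isMinOn_prox hP hx hxmin hz
  have hsplit : ⟪g, x - u⟫ = ⟪g - m, x - z⟫ + ⟪m, x - z⟫ + ⟪g, z - u⟫ := by
    simp only [inner_sub_left, inner_sub_right]; ring
  have hgap : ⟪g - m, x - z⟫ ≤ (L * ‖x - z₀‖ + δ) * ‖x - z‖ := by
    refine (real_inner_le_norm _ _).trans (mul_le_mul_of_nonneg_right ?_ (norm_nonneg _))
    linarith [norm_sub_le_norm_sub_add_norm_sub g (gradient f z₀) m]
  have hyoung : (L * ‖x - z₀‖ + δ) * ‖x - z‖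
      ≤ γ * ‖x - z₀‖ ^ 2 + γ * ‖x - z‖ ^ 2 + δ ^ 2 / (2 * γ) := by
    have hδ : δ * ‖x - z‖ ≤ γ / 2 * ‖x - z‖ ^ 2 + δ ^ 2 / (2 * γ) := by
      have hsq : γ / 2 * ‖x - z‖ ^ 2 + δ ^ 2 / (2 * γ) - δ * ‖x - z‖
          = (γ * ‖x - z‖ - δ) ^ 2 / (2 * γ) := by
        field_simp; ring
      linarith [div_nonneg (sq_nonneg (γ * ‖x - z‖ - δ)) (by positivity : (0 : ℝ) ≤ 2 * γ)]
    nlinarith [mul_le_mul_of_nonneg_right hLγ (mul_nonneg (norm_nonneg (x - z₀))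
      (norm_nonneg (x - z))), sq_nonneg (‖x - z₀‖ - ‖x - z‖)]
  linarith
end

theorem sum_range_le_of_le_telescoping {T : ℕ} {r e D : ℕ → ℝ} {γ : ℝ} (hγ : 0 ≤ γ)
    (hD : 0 ≤ D T) (h : ∀ i < T, r i ≤ γ * (D i - D (i + 1)) + e i) :
    ∑ i ∈ range T, r i ≤ γ * D 0 + ∑ i ∈ range T, e i := by
  calc ∑ i ∈ range T, r i ≤ ∑ i ∈ range T, (γ * (D i - D (i + 1)) + e i) :=
        sum_le_sum fun i hi => h i (mem_range.mp hi)
    _ = γ * (D 0 - D T) + ∑ i ∈ range T, e i := by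
        rw [sum_add_distrib, ← mul_sum, sum_range_sub']
    _ ≤ γ * D 0 + ∑ i ∈ range T, e i := by nlinarith

theorem prox_regret_bound_general {d T : ℕ}
    (P : Set (Euc d)) (hPconv : Convex ℝ P)
    (hPball : P ⊆ Metric.closedBall 0 1) (h0P : (0 : Euc d) ∈ P)
    (c : ℕ → Euc d → ℝ)
    (L : ℝ) (hL : 0 < L)
    (hconv : ∀ t, 1 ≤ t → t ≤ T → ConvexOn ℝ Set.univ (c t))
    (hdiff : ∀ t, 1 ≤ t → t ≤ T → Differentiable ℝ (c t))
    (hlip : ∀ t, 1 ≤ t → t ≤ T → ∀ u ∈ P, ∀ v ∈ P,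
      ‖gradient (c t) u - gradient (c t) v‖ ≤ L * ‖u - v‖)
    (η : ℝ) (hη0 : 0 < η) (hη1 : η ≤ 1 / 2)
    (x z : ℕ → Euc d) (hz0 : z 0 = 0)
    (hx : ∀ t, 1 ≤ t → t ≤ T → x t ∈ P ∧
      IsMinOn (fun u => ⟪gradient (c (t - 1)) (z (t - 1)), u⟫
        + L / (2 * η) * ‖u - z (t - 1)‖ ^ 2) P (x t))
    (hz : ∀ t, 1 ≤ t → t ≤ T → z t ∈ P ∧
      IsMinOn (fun u => ⟪gradient (c t) (x t), u⟫
        + L / (2 * η) * ‖u - z (t - 1)‖ ^ 2) P (z t))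
    (xstar : Euc d) (hxstar : xstar ∈ P) :
    (∑ t ∈ Finset.Icc 1 T, c t (x t)) - (∑ t ∈ Finset.Icc 1 T, c t xstar)
      ≤ L / (2 * η) + 2 * η / L *
        ∑ t ∈ Finset.range T, ‖gradient (c (t + 1)) (z t) - gradient (c t) (z t)‖ ^ 2 := by
  set γ := L / (2 * η)
  have hγ : 0 < γ := by positivity
  have hLγ : L ≤ γ := by rw [le_div_iff₀ (by positivity)]; nlinarith
  have hzP : ∀ i ≤ T, z i ∈ P := fun i hi => by
    rcases i with _ | i
    · exact hz0 ▸ h0P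
    · exact (hz (i + 1) (by omega) hi).1
  set δsq := fun i => ‖gradient (c (i + 1)) (z i) - gradient (c i) (z i)‖ ^ 2
  have hround : ∀ i < T, c (i + 1) (x (i + 1)) - c (i + 1) xstar
      ≤ γ * (‖xstar - z i‖ ^ 2 - ‖xstar - z (i + 1)‖ ^ 2) + δsq i / (2 * γ) := fun i hi => by
    obtain ⟨hxP, hxmin⟩ := hx (i + 1) (by omega) hi
    obtain ⟨hzP', hzmin⟩ := hz (i + 1) (by omega) hi
    rw [Nat.add_sub_cancel] at hxmin hzmin
    exact prox_step_regret_le hPconv ((hconv _ (by omega) hi).subset (Set.subset_univ P) hPconv)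
      hγ hLγ (hdiff _ (by omega) hi _) (hlip _ (by omega) hi _ hxP _ (hzP i hi.le))
      hxP hxmin hzP' hzmin hxstar
  have hstart : ‖xstar - z 0‖ ^ 2 ≤ 1 := by
    rw [hz0, sub_zero]
    exact pow_le_one₀ (norm_nonneg _) (mem_closedBall_zero_iff.mp (hPball hxstar))
  calc (∑ t ∈ Icc 1 T, c t (x t)) - (∑ t ∈ Icc 1 T, c t xstar)
      = ∑ i ∈ range T, (c (i + 1) (x (i + 1)) - c (i + 1) xstar) := by
        rw [← sum_sub_distrib, range_eq_Ico, sum_Ico_add' (fun t => c t (x t) - c t xstar),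
          zero_add, Ico_add_one_right_eq_Icc]
    _ ≤ γ * ‖xstar - z 0‖ ^ 2 + ∑ i ∈ range T, δsq i / (2 * γ) :=
        sum_range_le_of_le_telescoping (D := fun i => ‖xstar - z i‖ ^ 2) hγ.le (sq_nonneg _) hround
    _ ≤ γ + 2 * η / L * ∑ i ∈ range T, δsq i := by
        rw [← sum_div, div_eq_inv_mul, show (2 * γ)⁻¹ = η / L by simp only [γ]; field_simp]
        have hηL : η / L ≤ 2 * η / L := by gcongr; linarith
        exact add_le_add (mul_le_of_le_one_right hγ.le hstart)
          (mul_le_mul_of_nonneg_right hηL (sum_nonneg fun i _ => sq_nonneg _))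

/-- Regret bound for the prox method with step size `η ∈ (0, 1/2]`. -/
theorem prox_regret_bound {d T : ℕ} (hT : 1 ≤ T)
    (P : Set (Euc d)) (hPconv : Convex ℝ P) (hPcl : IsClosed P)
    (hPball : P ⊆ Metric.closedBall 0 1) (h0P : (0 : Euc d) ∈ P)
    (c : ℕ → Euc d → ℝ) (hc0 : c 0 = fun _ => (0 : ℝ))
    (L : ℝ) (hL : 0 < L)
    (hconv : ∀ t, 1 ≤ t → t ≤ T → ConvexOn ℝ Set.univ (c t))
    (hdiff : ∀ t, 1 ≤ t → t ≤ T → Differentiable ℝ (c t))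
    (hlip : ∀ t, 1 ≤ t → t ≤ T → ∀ u ∈ P, ∀ v ∈ P,
      ‖gradient (c t) u - gradient (c t) v‖ ≤ L * ‖u - v‖)
    (η : ℝ) (hη0 : 0 < η) (hη1 : η ≤ 1 / 2)
    (x z : ℕ → Euc d) (hz0 : z 0 = 0)
    (hx : ∀ t, 1 ≤ t → t ≤ T → x t ∈ P ∧
      IsMinOn (fun u => ⟪gradient (c (t - 1)) (z (t - 1)), u⟫
        + L / (2 * η) * ‖u - z (t - 1)‖ ^ 2) P (x t))
    (hz : ∀ t, 1 ≤ t → t ≤ T → z t ∈ P ∧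
      IsMinOn (fun u => ⟪gradient (c t) (x t), u⟫
        + L / (2 * η) * ‖u - z (t - 1)‖ ^ 2) P (z t))
    (xstar : Euc d) (hxstar : xstar ∈ P)
    (hmin : IsMinOn (fun u => ∑ t ∈ Finset.Icc 1 T, c t u) P xstar) :
    (∑ t ∈ Finset.Icc 1 T, c t (x t)) - (∑ t ∈ Finset.Icc 1 T, c t xstar)
      ≤ L / (2 * η) + 2 * η / L *
        ∑ t ∈ Finset.range T, ‖gradient (c (t + 1)) (z t) - gradient (c t) (z t)‖ ^ 2 :=
  prox_regret_bound_general P hPconv hPball h0P c L hL hconv hdiff hlip η hη0 hη1 x z hz0 hx hz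
    xstar hxstar
end

section
/- (Inequality (b3) in the proof of the prox lemma) Under the setting of the general-norm prox lemma—N a norm on ℝ^d with dual norm N*, ω differentiable and α-strongly convex with respect to N, D the induced Bregman distance, U ⊆ ℝ^d nonempty closed convex, z ∈ ℝ^d, γ > 0, and x, z₊ the minimizers over U of u ↦ γ⟨ξ, u⟩ + D(u, z) and u ↦ γ⟨ζ, u⟩ + D(u, z) respectively—one has α·N(z₊ − x)² ≤ γ·N*(ξ − ζ)·N(x − z₊). -/
/-!
Both points satisfy the first-order optimality condition of their prox problem on the convex
set `U`; tested against each other and added, these give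
`⟪∇ω z₊ - ∇ω x, z₊ - x⟫ ≤ γ ⟪ξ - ζ, z₊ - x⟫`. Strong convexity of `ω` bounds the left side below
by `α N(z₊ - x)²`, and the definition of the dual norm bounds the right side above by
`γ N*(ξ - ζ) N(z₊ - x)`. The dual norm is a genuine supremum because, in finite dimension,
`N` dominates a multiple of the Euclidean norm.
-/

open scoped RealInnerProductSpace

namespace Seminorm

variable {E : Type*} [NormedAddCommGroup E] [NormedSpace ℝ E] [FiniteDimensional ℝ E]

theorem exists_pos_mul_norm_le (p : Seminorm ℝ E) (hp : ∀ a, p a = 0 → a = 0) :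
    ∃ m > 0, ∀ a, m * ‖a‖ ≤ p a := by
  have hcont : ContinuousOn p (Metric.sphere 0 1) :=
    (p.convexOn.continuousOn isOpen_univ).mono (Set.subset_univ _)
  have hpos : ∀ a ∈ Metric.sphere (0 : E) 1, 0 < p a := fun a ha =>
    (apply_nonneg p a).lt_of_ne' fun h => by simp [hp a h] at ha
  obtain ⟨m, hm, hmle⟩ := (isCompact_sphere (0 : E) 1).exists_forall_le' hcont hpos
  refine ⟨m, hm, fun a => ?_⟩
  rcases eq_or_ne a 0 with rfl | ha
  · simp
  have hna : 0 < ‖a‖ := norm_pos_iff.mpr ha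
  have h := hmle (‖a‖⁻¹ • a) (by simp [norm_smul, hna.ne'])
  rw [map_smul_eq_mul, norm_inv, norm_norm, inv_mul_eq_div, le_div_iff₀ hna] at h
  linarith

variable {F : Type*} [NormedAddCommGroup F] [InnerProductSpace ℝ F] [FiniteDimensional ℝ F]
  (p : Seminorm ℝ F) (hp : ∀ a, p a = 0 → a = 0)
include hp

theorem bddAbove_inner_image_le_one (v : F) :
    BddAbove ((fun a => ⟪v, a⟫) '' {a | p a ≤ 1}) := by
  obtain ⟨m, hm, hmle⟩ := p.exists_pos_mul_norm_le hp
  refine ⟨‖v‖ / m, ?_⟩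
  rintro _ ⟨a, ha, rfl⟩
  have hna : ‖a‖ ≤ 1 / m := by
    rw [le_div_iff₀ hm]; linarith [hmle a, ha.out]
  calc ⟪v, a⟫ ≤ ‖v‖ * ‖a‖ := real_inner_le_norm v a
    _ ≤ ‖v‖ * (1 / m) := by gcongr
    _ = ‖v‖ / m := by ring

theorem inner_le_sSup_inner_mul (v a : F) :
    ⟪v, a⟫ ≤ sSup ((fun b => ⟪v, b⟫) '' {b | p b ≤ 1}) * p a := by
  rcases (apply_nonneg p a).eq_or_lt with h | h
  · simp [hp a h.symm]
  have hmem : (p a)⁻¹ • a ∈ {b | p b ≤ 1} := by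
    simp [map_smul_eq_mul, abs_of_pos h, h.ne']
  have hle : ⟪v, (p a)⁻¹ • a⟫ ≤ sSup ((fun b => ⟪v, b⟫) '' {b | p b ≤ 1}) :=
    le_csSup (p.bddAbove_inner_image_le_one hp v) ⟨_, hmem, rfl⟩
  rwa [real_inner_smul_right, inv_mul_eq_div, div_le_iff₀ h] at hle

end Seminorm

theorem IsMinOn.hasFDerivAt_sub_nonneg {E : Type*} [NormedAddCommGroup E] [NormedSpace ℝ E]
    {f : E → ℝ} {f' : E →L[ℝ] ℝ} {U : Set E} {x u : E} (hmin : IsMinOn f U x)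
    (hf : HasFDerivAt f f' x) (hU : Convex ℝ U) (hx : x ∈ U) (hu : u ∈ U) : 0 ≤ f' (u - x) :=
  hmin.localize.hasFDerivWithinAt_nonneg hf.hasFDerivWithinAt
    (sub_mem_posTangentConeAt_of_segment_subset (hU.segment_subset hx hu))

section Bregman

variable {F : Type*} [NormedAddCommGroup F] [InnerProductSpace ℝ F] [CompleteSpace F]

noncomputable def bregman (ω : F → ℝ) (u z : F) : ℝ := ω u - (ω z + ⟪gradient ω z, u - z⟫)

theorem hasFDerivAt_bregman {ω : F → ℝ} {x : F} (hω : DifferentiableAt ℝ ω x) (z : F) :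
    HasFDerivAt (fun u => bregman ω u z) (fderiv ℝ ω x - innerSL ℝ (gradient ω z)) x := by
  have hlin : HasFDerivAt (fun u => ⟪gradient ω z, u - z⟫) (innerSL ℝ (gradient ω z)) x := by
    simpa [inner_sub_right] using
      ((innerSL ℝ (gradient ω z)).hasFDerivAt (x := x)).sub_const ⟪gradient ω z, z⟫
  exact hω.hasFDerivAt.sub (hlin.const_add (ω z))

theorem IsMinOn.inner_gradient_bregman_nonneg {ω : F → ℝ} {U : Set F} {v z x u : F} {γ : ℝ}
    (hmin : IsMinOn (fun u => γ * ⟪v, u⟫ + bregman ω u z) U x) (hω : DifferentiableAt ℝ ω x)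
    (hU : Convex ℝ U) (hx : x ∈ U) (hu : u ∈ U) :
    0 ≤ ⟪γ • v + gradient ω x - gradient ω z, u - x⟫ := by
  have hf := (((innerSL ℝ v).hasFDerivAt (x := x)).const_mul γ).add (hasFDerivAt_bregman hω z)
  convert hmin.hasFDerivAt_sub_nonneg hf hU hx hu using 1
  simp only [inner_sub_right, inner_sub_left, inner_add_left, real_inner_smul_left,
    inner_gradient_left, add_apply, smul_apply, sub_apply, innerSL_apply_apply, smul_eq_mul, map_sub]
  ring

theorem mul_sq_le_inner_gradient_sub (p : Seminorm ℝ F) {ω : F → ℝ} {α : ℝ}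
    (hsc : ∀ u v, ω v + ⟪gradient ω v, u - v⟫ + α / 2 * p (u - v) ^ 2 ≤ ω u) (u v : F) :
    α * p (u - v) ^ 2 ≤ ⟪gradient ω u - gradient ω v, u - v⟫ := by
  have huv := hsc u v
  have hvu := hsc v u
  rw [map_sub_rev, ← neg_sub u v, inner_neg_right] at hvu
  rw [inner_sub_left]
  linarith

end Bregman

theorem prox_lemma_b3_general {d : ℕ}
    (N : Euc d → ℝ)
    (hNadd : ∀ a b, N (a + b) ≤ N a + N b)
    (hNsmul : ∀ (r : ℝ) (a : Euc d), N (r • a) = |r| * N a)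
    (hNdef : ∀ a, N a = 0 → a = 0)
    (Ns : Euc d → ℝ)
    (hNs : ∀ v, Ns v = sSup ((fun a => ⟪v, a⟫) '' {a | N a ≤ 1}))
    (ω : Euc d → ℝ) (hωdiff : Differentiable ℝ ω)
    (α : ℝ)
    (hsc : ∀ u v, ω v + ⟪gradient ω v, u - v⟫ + α / 2 * N (u - v) ^ 2 ≤ ω u)
    (D : Euc d → Euc d → ℝ)
    (hD : ∀ a b, D a b = ω a - (ω b + ⟪gradient ω b, a - b⟫))
    (U : Set (Euc d)) (hUconv : Convex ℝ U)
    (z ξ ζ : Euc d) (γ : ℝ) (hγ : 0 < γ)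
    (x zp : Euc d) (hxU : x ∈ U) (hzpU : zp ∈ U)
    (hxmin : IsMinOn (fun u => γ * ⟪ξ, u⟫ + D u z) U x)
    (hzpmin : IsMinOn (fun u => γ * ⟪ζ, u⟫ + D u z) U zp) :
    α * N (zp - x) ^ 2 ≤ γ * Ns (ξ - ζ) * N (x - zp) := by
  let p : Seminorm ℝ (Euc d) := Seminorm.of N hNadd fun r a => by rw [hNsmul, Real.norm_eq_abs]
  obtain rfl : D = bregman ω := funext₂ hD
  have hoptx := hxmin.inner_gradient_bregman_nonneg (hωdiff x) hUconv hxU hzpU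
  have hoptzp := hzpmin.inner_gradient_bregman_nonneg (hωdiff zp) hUconv hzpU hxU
  have hmono : α * N (zp - x) ^ 2 ≤ ⟪gradient ω zp - gradient ω x, zp - x⟫ :=
    mul_sq_le_inner_gradient_sub p hsc zp x
  have hdual : ⟪ξ - ζ, zp - x⟫ ≤ Ns (ξ - ζ) * N (zp - x) :=
    hNs (ξ - ζ) ▸ p.inner_le_sSup_inner_mul hNdef (ξ - ζ) (zp - x)
  have hsum : ⟪gradient ω zp - gradient ω x, zp - x⟫ ≤ γ * ⟪ξ - ζ, zp - x⟫ := by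
    rw [← neg_sub zp x, inner_neg_right] at hoptzp
    simp only [inner_add_left, inner_sub_left, real_inner_smul_left] at hoptx hoptzp ⊢
    linarith
  rw [show N (x - zp) = N (zp - x) from map_sub_rev p x zp, mul_assoc]
  exact hmono.trans (hsum.trans (mul_le_mul_of_nonneg_left hdual hγ.le))

/-- Inequality (b3) in the proof of the prox lemma:
`α·N(z₊ − x)² ≤ γ·N*(ξ − ζ)·N(x − z₊)`. -/
theorem prox_lemma_b3 {d : ℕ}
    (N : Euc d → ℝ)
    (hNadd : ∀ a b, N (a + b) ≤ N a + N b)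
    (hNsmul : ∀ (r : ℝ) (a : Euc d), N (r • a) = |r| * N a)
    (hNdef : ∀ a, N a = 0 → a = 0)
    (Ns : Euc d → ℝ)
    (hNs : ∀ v, Ns v = sSup ((fun a => ⟪v, a⟫) '' {a | N a ≤ 1}))
    (ω : Euc d → ℝ) (hωdiff : Differentiable ℝ ω)
    (α : ℝ) (hα : 0 < α)
    (hsc : ∀ u v, ω v + ⟪gradient ω v, u - v⟫ + α / 2 * N (u - v) ^ 2 ≤ ω u)
    (D : Euc d → Euc d → ℝ)
    (hD : ∀ a b, D a b = ω a - (ω b + ⟪gradient ω b, a - b⟫))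
    (U : Set (Euc d)) (hUne : U.Nonempty) (hUcl : IsClosed U) (hUconv : Convex ℝ U)
    (z ξ ζ : Euc d) (γ : ℝ) (hγ : 0 < γ)
    (x zp : Euc d) (hxU : x ∈ U) (hzpU : zp ∈ U)
    (hxmin : IsMinOn (fun u => γ * ⟪ξ, u⟫ + D u z) U x)
    (hzpmin : IsMinOn (fun u => γ * ⟪ζ, u⟫ + D u z) U zp) :
    α * N (zp - x) ^ 2 ≤ γ * Ns (ξ - ζ) * N (x - zp) :=
  prox_lemma_b3_general N hNadd hNsmul hNdef Ns hNs ω hωdiff α hsc D hD U hUconv z ξ ζ γ hγ x zp hxU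
    hzpU hxmin hzpmin
end
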